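/- arXiv:1410.0309 — 2 statements merged into one kernel-verified Lean document; each statement's English description precedes it below -/
import Mathlib

section
/- Let S be a finite point set in the plane with x = (-1,0), y = (1,0) in S, and let m be a Hamiltonian cycle on S minimal with respect to the lexicographic order on decreasingly-sorted edge-length sequences. Let u_i, u_j (i ≠ j) be distinct points of S \ {x,y} lying in the closed unit disk centered at the origin, and let s_i, s_j be their respective predecessors along the traversal of m starting with the directed edge xy, with s_i, s_j, u_i, u_j, x, y all distinct. Then dist(s_i, s_j) ≥ max(dist(s_i, u_i), dist(s_j, u_j), 2). -/
/-!
Write the cycle as the cyclic list `x, y, …, sᵢ, uᵢ, …, sⱼ, uⱼ, …` (after swapping `i` and `j`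
if necessary). Reversing the two stretches `uᵢ … sⱼ` and `uⱼ … x` gives the Hamiltonian cycle
`y, …, sᵢ, sⱼ, …, uᵢ, x, …, uⱼ`, which trades the edges `xy`, `sᵢuᵢ`, `sⱼuⱼ` for `sᵢsⱼ`, `uᵢx`,
`uⱼy` and keeps all others. If every new edge were shorter than the longest removed one, the
sorted edge-length sequence would drop lexicographically, contradicting minimality; so the longest
new edge is at least `max (dist sᵢ uᵢ) (dist sⱼ uⱼ) 2`. Since `uᵢ` and `uⱼ` lie in the unit disk
and differ from `±x`, the parallelogram law makes their edges to `x` and `y` shorter than `2`,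
so the longest new edge is `sᵢsⱼ`.
-/

open Metric

noncomputable section

/-- A Hamiltonian cycle on the point set `S`: a cyclic ordering (an injection from
`ZMod S.card`, hence a bijection onto `S`) of all points of `S`. -/
def IsHamCycle (S : Finset (EuclideanSpace ℝ (Fin 2)))
    (c : ZMod S.card → EuclideanSpace ℝ (Fin 2)) : Prop :=
  Function.Injective c ∧ ∀ i, c i ∈ S

/-- The distance sequence of a Hamiltonian cycle: edge lengths sorted decreasingly. -/
def dseq (S : Finset (EuclideanSpace ℝ (Fin 2)))
    (c : ZMod S.card → EuclideanSpace ℝ (Fin 2)) : List ℝ :=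
  ((List.finRange S.card).map
    (fun i => dist (c ((i : ℕ) : ZMod S.card)) (c (((i : ℕ) : ZMod S.card) + 1)))).insertionSort
    (· ≥ ·)

/-- `m` is a Hamiltonian cycle on `S` minimizing lexicographically the
decreasingly-sorted sequence of its edge lengths. -/
def IsMinHamCycle (S : Finset (EuclideanSpace ℝ (Fin 2)))
    (m : ZMod S.card → EuclideanSpace ℝ (Fin 2)) : Prop :=
  IsHamCycle S m ∧ ∀ c, IsHamCycle S c → ¬ List.Lex (· < ·) (dseq S c) (dseq S m)

namespace List

section Dist

variable {α : Type*} [Dist α]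

def pathDists (l : List α) : List ℝ := zipWith dist l l.tail

@[simp] lemma pathDists_singleton (a : α) : pathDists [a] = [] := rfl

@[simp] lemma pathDists_cons_cons (a b : α) (l : List α) :
    pathDists (a :: b :: l) = dist a b :: pathDists (b :: l) := rfl

lemma pathDists_append_cons (l₁ : List α) (a : α) (l₂ : List α) :
    pathDists (l₁ ++ a :: l₂) = pathDists (l₁ ++ [a]) ++ pathDists (a :: l₂) := by
  induction l₁ with
  | nil => simp
  | cons b l₁ ih => cases l₁ <;> simp_all

lemma pathDists_cons_append_cons_cons (c : α) (l₁ : List α) (a b : α) (l₂ : List α) :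
    pathDists (c :: (l₁ ++ a :: b :: l₂)) =
      pathDists (c :: (l₁ ++ [a])) ++ dist a b :: pathDists (b :: l₂) := by
  simpa using pathDists_append_cons (c :: l₁) a (b :: l₂)

def cycleDists (l : List α) : List ℝ := zipWith dist l (l.rotate 1)

lemma cycleDists_cons (a : α) (l : List α) :
    cycleDists (a :: l) = pathDists (a :: (l ++ [a])) := by
  rw [cycleDists, pathDists, rotate_cons_succ, rotate_zero, tail_cons, ← cons_append]
  conv_rhs => rw [← append_nil (l ++ [a]), zipWith_append (by simp)]
  simp

end Dist

section PseudoMetricSpace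

variable {α : Type*} [PseudoMetricSpace α]

lemma pathDists_reverse (l : List α) : pathDists l.reverse = (pathDists l).reverse := by
  induction l with
  | nil => rfl
  | cons a l ih =>
    cases l with
    | nil => rfl
    | cons b l =>
      rw [reverse_cons, reverse_cons, append_assoc, singleton_append, pathDists_append_cons,
        ← reverse_cons, ih]
      simp [dist_comm]

lemma pathDists_cons_reverse_append (a b : α) (l : List α) :
    pathDists (b :: (l.reverse ++ [a])) = (pathDists (a :: (l ++ [b]))).reverse := by
  simpa using pathDists_reverse (a :: (l ++ [b]))

lemma exists_perm_cycleDists_threeOpt (x y s u s' u' : α) (A B C : List α) :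
    ∃ (L' : List α) (U : Multiset ℝ), L'.Perm (x :: y :: A ++ s :: u :: B ++ s' :: u' :: C) ∧
      ↑(cycleDists (x :: y :: A ++ s :: u :: B ++ s' :: u' :: C)) =
        U + {dist x y, dist s u, dist s' u'} ∧
      ↑(cycleDists L') = U + {dist s s', dist u x, dist u' y} := by
  classical
  refine ⟨y :: A ++ s :: s' :: B.reverse ++ u :: x :: C.reverse ++ [u'],
    pathDists (y :: (A ++ [s])) + pathDists (u :: (B ++ [s'])) + pathDists (u' :: (C ++ [x])),
    perm_iff_count.mpr fun a => ?_, ?_, ?_⟩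
  · simp only [count_cons, count_append, count_reverse, count_nil]
    omega
  all_goals
    simp only [cons_append, nil_append, append_assoc, cycleDists_cons, pathDists_cons_cons,
      pathDists_cons_append_cons_cons, pathDists_cons_reverse_append, pathDists_singleton,
      ← Multiset.coe_add, ← Multiset.cons_coe, Multiset.coe_reverse, Multiset.insert_eq_cons]
    simp only [← Multiset.singleton_add]
    abel

end PseudoMetricSpace

lemma drop_eq_take_append_getElem_cons_getElem_cons {α : Type*} (L : List α) {i j : ℕ}
    (hij : i ≤ j) (hj : j + 1 < L.length) :
    L.drop i = (L.drop i).take (j - i) ++ L[j] :: L[j + 1] :: L.drop (j + 2) := by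
  conv_lhs => rw [← take_append_drop (j - i) (L.drop i)]
  rw [drop_drop, Nat.add_sub_cancel' hij, drop_eq_getElem_cons (i := j) (by omega),
    drop_eq_getElem_cons (i := j + 1) hj]

lemma exists_eq_cons_cons_append_cons_cons_append_cons_cons {α : Type*} (L : List α)
    {p q : ℕ} (hp : 2 ≤ p) (hpq : p + 2 ≤ q) (hq : q + 1 < L.length) :
    ∃ A B C, L = L[0] :: L[1] :: A ++ L[p] :: L[p + 1] :: B ++ L[q] :: L[q + 1] :: C := by
  have h₀ := L.drop_eq_take_append_getElem_cons_getElem_cons (le_refl 0) (by omega)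
  have h₁ := L.drop_eq_take_append_getElem_cons_getElem_cons hp (by omega)
  have h₂ := L.drop_eq_take_append_getElem_cons_getElem_cons hpq hq
  rw [h₁, h₂] at h₀
  exact ⟨_, _, _, by
    simpa only [drop_zero, Nat.sub_self, take_zero, nil_append, zero_add, cons_append,
      append_assoc] using h₀⟩

theorem lex_lt_of_coe_eq_add {β : Type*} [LinearOrder β] {l₁ l₂ : List β}
    (h₁ : l₁.Pairwise (· ≥ ·)) (h₂ : l₂.Pairwise (· ≥ ·)) {u A B : Multiset β}
    (hl₁ : (l₁ : Multiset β) = u + B) (hl₂ : (l₂ : Multiset β) = u + A) {M : β} (hM : M ∈ A)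
    (hB : ∀ z ∈ B, z < M) : Lex (· < ·) l₁ l₂ := by
  induction l₁ generalizing l₂ u with
  | nil =>
    cases l₂ with
    | nil => simp_all [eq_comm (a := (0 : Multiset β))]
    | cons => exact .nil
  | cons a₁ t₁ ih =>
    cases l₂ with
    | nil => simp_all [eq_comm (a := (0 : Multiset β))]
    | cons a₂ t₂ =>
      have hle : ∀ z ∈ u + A, z ≤ a₂ := by
        rw [← hl₂]; intro z hz
        rcases mem_cons.mp hz with rfl | hz
        exacts [le_rfl, rel_of_pairwise_cons h₂ hz]
      have ha₁ : a₁ ∈ u + B := by rw [← hl₁]; simp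
      rcases Multiset.mem_add.mp ha₁ with hu | hb
      · rcases (hle a₁ (Multiset.mem_add.mpr (.inl hu))).lt_or_eq with hlt | rfl
        · exact .rel hlt
        · refine .cons (ih h₁.of_cons h₂.of_cons (u := u.erase a₁) ?_ ?_)
          · simpa [Multiset.erase_add_left_pos _ hu] using congrArg (·.erase a₁) hl₁
          · simpa [Multiset.erase_add_left_pos _ hu] using congrArg (·.erase a₁) hl₂
      · exact .rel ((hB a₁ hb).trans_le (hle M (Multiset.mem_add.mpr (.inr hM))))

end List

open List

namespace ZMod

lemma bijective_natCast_fin_val (n : ℕ) [NeZero n] :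
    Function.Bijective fun i : Fin n => ((i : ℕ) : ZMod n) := by
  refine (Fintype.bijective_iff_injective_and_card _).mpr ⟨fun i j h => ?_, by simp⟩
  have := congrArg ZMod.val h
  rwa [ZMod.val_cast_of_lt i.isLt, ZMod.val_cast_of_lt j.isLt, Fin.val_inj] at this

lemma coe_map_range {β : Type*} {n : ℕ} [NeZero n] (F : ZMod n → β) :
    (((range n).map fun k : ℕ => F k) : Multiset β) = Finset.univ.val.map F := by
  rw [← Multiset.map_univ_val_equiv (Equiv.ofBijective _ (bijective_natCast_fin_val n)),
    Multiset.map_map, ← map_coe_finRange_eq_range, map_map, ← ofFn_eq_map, ← Fin.univ_val_map]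
  rfl

lemma coe_map_range_dist_eq_cycleDists {α : Type*} [Dist α] {n : ℕ} [NeZero n]
    {c : ZMod n → α} (i₀ : ZMod n) {l : List α} (hl : l.length = n)
    (hc : ∀ k (hk : k < l.length), c (i₀ + k) = l[k]) :
    (((range n).map fun k : ℕ => dist (c k) (c (k + 1))) : Multiset ℝ) = cycleDists l := by
  rw [coe_map_range (fun z => dist (c z) (c (z + 1))),
    ← Multiset.map_univ_val_equiv (Equiv.addLeft i₀), Multiset.map_map, ← coe_map_range]
  congr 1
  refine ext_getElem (by simp [cycleDists, hl]) fun k hk _ => ?_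
  have hkn : k < n := by simpa using hk
  have hsucc : i₀ + k + 1 = i₀ + (((k + 1) % n : ℕ) : ZMod n) := by
    rw [ZMod.natCast_mod]; push_cast; ring
  have hmod : (k + 1) % n < l.length := by rw [hl]; exact Nat.mod_lt _ (NeZero.pos n)
  simp only [cycleDists, getElem_map, getElem_range, getElem_zipWith, getElem_rotate,
    Function.comp_apply, Equiv.coe_addLeft, hc _ (hl ▸ hkn), hsucc, hc _ hmod, hl]

lemma exists_sub_one_eq_add_natCast {n : ℕ} [NeZero n] (i₀ j : ZMod n) :
    ∃ p < n, j - 1 = i₀ + p ∧ j = i₀ + (p + 1 : ℕ) :=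
  ⟨(j - 1 - i₀).val, val_lt _, by simp, by rw [Nat.cast_succ, natCast_zmod_val]; ring⟩

end ZMod

local notation "ℝ²" => EuclideanSpace ℝ (Fin 2)

lemma coe_dseq (S : Finset ℝ²) (c : ZMod S.card → ℝ²) :
    (dseq S c : Multiset ℝ) = ((range S.card).map fun k : ℕ => dist (c k) (c (k + 1))) := by
  rw [dseq, Multiset.coe_eq_coe.mpr (perm_insertionSort _ _)]
  simp [← map_coe_finRange_eq_range, ← map_eq_flatMap]

lemma isHamCycle_getD {S : Finset ℝ²} [NeZero S.card] {l : List ℝ²} (hl : l.length = S.card)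
    (hnd : l.Nodup) (hS : ∀ p ∈ l, p ∈ S) : IsHamCycle S fun z => l.getD z.val 0 := by
  have hlt (z : ZMod S.card) : z.val < l.length := by rw [hl]; exact ZMod.val_lt z
  refine ⟨fun z w h => ZMod.val_injective _ ?_, fun z => ?_⟩
  · dsimp only at h
    rw [getD_eq_getElem _ _ (hlt z), getD_eq_getElem _ _ (hlt w)] at h
    exact hnd.getElem_inj_iff.mp h
  · dsimp only
    rw [getD_eq_getElem _ _ (hlt z)]
    exact hS _ (getElem_mem (hlt z))

theorem IsMinHamCycle.exists_le_of_exchange {S : Finset ℝ²} {m c : ZMod S.card → ℝ²}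
    (hm : IsMinHamCycle S m) (hc : IsHamCycle S c) {u A B : Multiset ℝ}
    (hmA : (dseq S m : Multiset ℝ) = u + A) (hcB : (dseq S c : Multiset ℝ) = u + B) {M : ℝ}
    (hM : M ∈ A) : ∃ z ∈ B, M ≤ z := by
  by_contra! h
  exact hm.2 c hc (lex_lt_of_coe_eq_add (pairwise_insertionSort _ _)
    (pairwise_insertionSort _ _) hcB hmA hM h)

theorem IsMinHamCycle.max_le_of_threeOpt {S : Finset ℝ²} {m : ZMod S.card → ℝ²}
    (hm : IsMinHamCycle S m) (i₀ : ZMod S.card) {p q : ℕ} (hp : 2 ≤ p) (hpq : p + 2 ≤ q)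
    (hq : q + 1 < S.card) :
    dist (m i₀) (m (i₀ + 1)) ⊔ dist (m (i₀ + p)) (m (i₀ + (p + 1 : ℕ))) ⊔
        dist (m (i₀ + q)) (m (i₀ + (q + 1 : ℕ))) ≤
      dist (m (i₀ + p)) (m (i₀ + q)) ⊔ dist (m (i₀ + (p + 1 : ℕ))) (m i₀) ⊔
        dist (m (i₀ + (q + 1 : ℕ))) (m (i₀ + 1)) := by
  have : NeZero S.card := ⟨by omega⟩
  set L := (range S.card).map fun k : ℕ => m (i₀ + k)
  have hlen : L.length = S.card := by simp [L]
  have hget (k : ℕ) (hk : k < L.length) : m (i₀ + k) = L[k] := by simp [L]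
  obtain ⟨A, B, C, hsplit⟩ :=
    L.exists_eq_cons_cons_append_cons_cons_append_cons_cons hp hpq (hlen ▸ hq)
  obtain ⟨L', U, hperm, hold, hnew⟩ :=
    exists_perm_cycleDists_threeOpt L[0] L[1] L[p] L[p + 1] L[q] L[q + 1] A B C
  rw [← hsplit] at hperm hold
  have hnodup : L.Nodup := by
    refine (nodup_range).map_on fun k hk l hl hkl => ?_
    have := congrArg ZMod.val (add_left_cancel (hm.1.1 hkl))
    rwa [ZMod.val_cast_of_lt (mem_range.mp hk), ZMod.val_cast_of_lt (mem_range.mp hl)] at this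
  have hlen' : L'.length = S.card := hperm.length_eq.trans hlen
  set c : ZMod S.card → ℝ² := fun z => L'.getD z.val 0
  have hc : IsHamCycle S c := isHamCycle_getD hlen' (hperm.nodup_iff.mpr hnodup) fun a ha => by
    obtain ⟨k, -, rfl⟩ := mem_map.mp (hperm.subset ha)
    exact hm.1.2 _
  have hmL : (dseq S m : Multiset ℝ) = cycleDists L := by
    rw [coe_dseq]; exact ZMod.coe_map_range_dist_eq_cycleDists i₀ hlen hget
  have hcL' : (dseq S c : Multiset ℝ) = cycleDists L' := by
    rw [coe_dseq]
    refine ZMod.coe_map_range_dist_eq_cycleDists 0 hlen' fun k hk => ?_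
    simp only [c, zero_add, ZMod.val_cast_of_lt (hlen' ▸ hk), getD_eq_getElem _ _ hk]
  have h₀ : m i₀ = L[0] := by simpa using hget 0 (by omega)
  have h₁ : m (i₀ + 1) = L[1] := by simpa using hget 1 (by omega)
  rw [h₀, h₁, hget p (by omega), hget q (by omega), hget (p + 1) (by omega),
    hget (q + 1) (by omega)]
  have hle (M : ℝ) (hM : M ∈ ({dist L[0] L[1], dist L[p] L[p + 1], dist L[q] L[q + 1]} :
      Multiset ℝ)) : M ≤ dist L[p] L[q] ⊔ dist L[p + 1] L[0] ⊔ dist L[q + 1] L[1] := by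
    obtain ⟨z, hz, hMz⟩ := hm.exists_le_of_exchange hc (hmL.trans hold) (hcL'.trans hnew) hM
    simp only [Multiset.insert_eq_cons, Multiset.mem_cons, Multiset.mem_singleton] at hz
    rcases hz with rfl | rfl | rfl <;> simp [hMz]
  exact max_le (max_le (hle _ (by simp)) (hle _ (by simp))) (hle _ (by simp))

theorem IsMinHamCycle.max_le_of_pred {S : Finset ℝ²} {m : ZMod S.card → ℝ²}
    (hm : IsMinHamCycle S m) {i₀ ji jj : ZMod S.card} {x y ui uj si sj : ℝ²}
    (hix : m i₀ = x) (hiy : m (i₀ + 1) = y) (hji : m ji = ui) (hjj : m jj = uj)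
    (hsi : si = m (ji - 1)) (hsj : sj = m (jj - 1))
    (hdistinct : [si, sj, ui, uj, x, y].Pairwise (· ≠ ·)) :
    dist x y ⊔ dist si ui ⊔ dist sj uj ≤
      dist si sj ⊔ (dist ui x ⊔ dist ui y ⊔ dist uj x ⊔ dist uj y) := by
  simp only [List.pairwise_cons, List.mem_cons, List.not_mem_nil,
    forall_eq_or_imp, List.Pairwise.nil, and_true] at hdistinct
  obtain ⟨⟨hsisj, -, hsiuj, hsix, hsiy, -⟩, ⟨hsjui, -, hsjx, hsjy, -⟩, ⟨-, huix, -⟩, ⟨hujx, -⟩, -⟩ :=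
    hdistinct
  have : NeZero S.card := ⟨(Finset.card_pos.mpr ⟨_, hm.1.2 i₀⟩).ne'⟩
  obtain ⟨p, hp, hpi, hpi'⟩ := ZMod.exists_sub_one_eq_add_natCast i₀ ji
  obtain ⟨q, hq, hqj, hqj'⟩ := ZMod.exists_sub_one_eq_add_natCast i₀ jj
  rw [hpi] at hsi; rw [hpi'] at hji; rw [hqj] at hsj; rw [hqj'] at hjj
  have hne {k l : ℕ} (h : m (i₀ + k) ≠ m (i₀ + l)) : k ≠ l := fun hkl => h (by rw [hkl])
  have hp0 : p ≠ 0 := hne (by simpa [hix, ← hsi] using hsix)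
  have hp1 : p ≠ 1 := hne (by simpa [hiy, ← hsi] using hsiy)
  have hq0 : q ≠ 0 := hne (by simpa [hix, ← hsj] using hsjx)
  have hq1 : q ≠ 1 := hne (by simpa [hiy, ← hsj] using hsjy)
  have hpq : p ≠ q := hne (by rwa [← hsi, ← hsj])
  have hqp1 : q ≠ p + 1 := hne (by rwa [← hsj, hji])
  have hpq1 : p ≠ q + 1 := hne (by rwa [← hsi, hjj])
  have hpn : p + 1 ≠ S.card := hne (by rwa [hji, ZMod.natCast_self, add_zero, hix])
  have hqn : q + 1 ≠ S.card := hne (by rwa [hjj, ZMod.natCast_self, add_zero, hix])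
  rcases lt_or_gt_of_ne hpq with h | h
  · have key := hm.max_le_of_threeOpt i₀ (by omega) (by omega : p + 2 ≤ q) (by omega)
    rw [← hsi, ← hsj, hji, hjj, hix, hiy] at key
    grind
  · have key := hm.max_le_of_threeOpt i₀ (by omega) (by omega : q + 2 ≤ p) (by omega)
    rw [← hsi, ← hsj, hji, hjj, hix, hiy, dist_comm sj si] at key
    grind

lemma dist_lt_two_of_norm_le_one {E : Type*} [NormedAddCommGroup E] [InnerProductSpace ℝ E]
    {u v : E} (hu : ‖u‖ ≤ 1) (hv : ‖v‖ ≤ 1) (huv : u ≠ -v) : dist u v < 2 := by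
  have hpos : 0 < ‖u + v‖ := norm_pos_iff.mpr fun h => huv (eq_neg_of_add_eq_zero_left h)
  have := parallelogram_law_with_norm ℝ u v
  rw [dist_eq_norm]
  nlinarith [norm_nonneg (u - v), norm_nonneg u, norm_nonneg v]

theorem stmt_10_general (S : Finset (EuclideanSpace ℝ (Fin 2)))
    (m : ZMod S.card → EuclideanSpace ℝ (Fin 2)) (hm : IsMinHamCycle S m)
    (x y : EuclideanSpace ℝ (Fin 2))
    (hx : x = (EuclideanSpace.equiv (Fin 2) ℝ).symm ![-1, 0])
    (hy : y = (EuclideanSpace.equiv (Fin 2) ℝ).symm ![1, 0])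
    (i₀ : ZMod S.card) (hix : m i₀ = x) (hiy : m (i₀ + 1) = y)
    (ui uj : EuclideanSpace ℝ (Fin 2))
    (hui1 : ‖ui‖ ≤ 1) (huj1 : ‖uj‖ ≤ 1)
    (ji jj : ZMod S.card) (hji : m ji = ui) (hjj : m jj = uj)
    (si sj : EuclideanSpace ℝ (Fin 2))
    (hsi : si = m (ji - 1)) (hsj : sj = m (jj - 1))
    (hdistinct : [si, sj, ui, uj, x, y].Pairwise (· ≠ ·)) :
    dist si sj ≥ max (max (dist si ui) (dist sj uj)) 2 := by
  have key := hm.max_le_of_pred hix hiy hji hjj hsi hsj hdistinct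
  simp only [List.pairwise_cons, List.mem_cons, List.not_mem_nil,
    forall_eq_or_imp, List.Pairwise.nil, and_true] at hdistinct
  obtain ⟨-, -, ⟨-, huix, huiy, -⟩, ⟨hujx, hujy, -⟩, -⟩ := hdistinct
  have hyx : y = -x := by rw [hx, hy]; ext i; fin_cases i <;> simp
  have hx1 : ‖x‖ = 1 := by rw [hx]; simp [EuclideanSpace.norm_eq]
  have hxy : dist x y = 2 := by
    rw [hyx, dist_eq_norm, sub_neg_eq_add, ← two_smul ℝ, norm_smul, hx1]; norm_num
  have hshort (u) (hu : ‖u‖ ≤ 1) (hux : u ≠ x) (huy : u ≠ y) : dist u x < 2 ∧ dist u y < 2 :=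
    ⟨dist_lt_two_of_norm_le_one hu hx1.le (by rwa [← hyx]),
      dist_lt_two_of_norm_le_one hu (by rw [hyx, norm_neg, hx1]) (by rwa [hyx, neg_neg])⟩
  have hi := hshort ui hui1 huix huiy
  have hj := hshort uj huj1 hujx hujy
  rw [hxy] at key
  grind

theorem stmt_10 (S : Finset (EuclideanSpace ℝ (Fin 2)))
    (m : ZMod S.card → EuclideanSpace ℝ (Fin 2)) (hm : IsMinHamCycle S m)
    (x y : EuclideanSpace ℝ (Fin 2))
    (hx : x = (EuclideanSpace.equiv (Fin 2) ℝ).symm ![-1, 0])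
    (hy : y = (EuclideanSpace.equiv (Fin 2) ℝ).symm ![1, 0])
    (hxS : x ∈ S) (hyS : y ∈ S)
    (i₀ : ZMod S.card) (hix : m i₀ = x) (hiy : m (i₀ + 1) = y)
    (ui uj : EuclideanSpace ℝ (Fin 2))
    (huiS : ui ∈ S) (hujS : uj ∈ S)
    (hui1 : ‖ui‖ ≤ 1) (huj1 : ‖uj‖ ≤ 1)
    (ji jj : ZMod S.card) (hji : m ji = ui) (hjj : m jj = uj)
    (si sj : EuclideanSpace ℝ (Fin 2))
    (hsi : si = m (ji - 1)) (hsj : sj = m (jj - 1))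
    (hdistinct : [si, sj, ui, uj, x, y].Pairwise (· ≠ ·)) :
    dist si sj ≥ max (max (dist si ui) (dist sj uj)) 2 :=
  stmt_10_general S m hm x y hx hy i₀ hix hiy ui uj hui1 huj1 ji jj hji hjj si sj hsi hsj hdistinct

end
end

section
/- Let s_i, s_j be points in the plane with ‖s_i‖ ≥ ‖s_j‖ > 3, and let u_i be a point with ‖u_i‖ ≤ 1 such that dist(s_i, s_j) ≥ dist(s_i, u_i). Then the radial projections s'_i = 3 s_i/‖s_i‖ and s'_j = 3 s_j/‖s_j‖ satisfy dist(s'_i, s'_j) ≥ 2. -/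
/-! The radial projection onto the circle of radius 3 keeps the angle `α` at the origin, so by the
law of cosines it suffices to show `cos α ≤ 7/9`. The law of cosines in the triangle `0, sᵢ, sⱼ`,
together with `dist(sᵢ, sⱼ) ≥ dist(sᵢ, uᵢ) ≥ ‖sᵢ‖ - 1`, bounds `cos α` by a quantity that is at most
`7/9` as soon as `‖sᵢ‖ ≥ ‖sⱼ‖ ≥ 3`. -/

open InnerProductGeometry

variable {V : Type*} [NormedAddCommGroup V] [InnerProductSpace ℝ V]

theorem cos_angle_le_seven_ninths_of_norm_sub_one_le {x y : V} (hy : 3 ≤ ‖y‖)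
    (hxy : ‖y‖ ≤ ‖x‖) (hdist : ‖x‖ - 1 ≤ ‖x - y‖) :
    Real.cos (angle x y) ≤ 7 / 9 := by
  have hlaw := norm_sub_sq_eq_norm_sq_add_norm_sq_sub_two_mul_norm_mul_norm_mul_cos_angle x y
  have hsq : (‖x‖ - 1) * (‖x‖ - 1) ≤ ‖x - y‖ * ‖x - y‖ :=
    mul_self_le_mul_self (by linarith) hdist
  have hcos : 2 * (‖x‖ * ‖y‖) * Real.cos (angle x y) ≤ ‖y‖ ^ 2 + 2 * ‖x‖ - 1 := by nlinarith
  -- `9‖y‖² + 18‖x‖ - 9 ≤ 14‖x‖‖y‖` is linear in `‖x‖` with negative slope and holds at `‖x‖ = ‖y‖`.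
  have hpoly : 9 * (‖y‖ ^ 2 + 2 * ‖x‖ - 1) ≤ 14 * (‖x‖ * ‖y‖) := by
    nlinarith [mul_nonneg (sub_nonneg.2 hxy) (sub_nonneg.2 hy)]
  have hpos : 0 < ‖x‖ * ‖y‖ := mul_pos (by linarith) (by linarith)
  nlinarith

theorem norm_smul_div_norm_sub_smul_div_norm_sq {x y : V} (hx : x ≠ 0) (hy : y ≠ 0) {r : ℝ}
    (hr : 0 < r) :
    ‖(r / ‖x‖) • x - (r / ‖y‖) • y‖ ^ 2 = 2 * r ^ 2 * (1 - Real.cos (angle x y)) := by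
  have hrx : 0 < r / ‖x‖ := div_pos hr (norm_pos_iff.2 hx)
  have hry : 0 < r / ‖y‖ := div_pos hr (norm_pos_iff.2 hy)
  have hnorm : ∀ {z : V}, z ≠ 0 → ‖(r / ‖z‖) • z‖ = r := fun hz => by
    rw [norm_smul, Real.norm_of_nonneg (div_pos hr (norm_pos_iff.2 hz)).le,
      div_mul_cancel₀ r (norm_ne_zero_iff.2 hz)]
  rw [sq, norm_sub_sq_eq_norm_sq_add_norm_sq_sub_two_mul_norm_mul_norm_mul_cos_angle,
    angle_smul_left_of_pos _ _ hrx, angle_smul_right_of_pos _ _ hry, hnorm hx, hnorm hy]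
  ring

theorem stmt_13 (si sj ui : EuclideanSpace ℝ (Fin 2))
    (hj : ‖sj‖ > 3) (hij : ‖si‖ ≥ ‖sj‖) (hu : ‖ui‖ ≤ 1)
    (h : dist si sj ≥ dist si ui) :
    dist ((3 / ‖si‖) • si) ((3 / ‖sj‖) • sj) ≥ 2 := by
  have hsj : sj ≠ 0 := norm_pos_iff.1 (by linarith)
  have hsi : si ≠ 0 := norm_pos_iff.1 (by linarith)
  have hdist : ‖si‖ - 1 ≤ ‖si - sj‖ := by
    linarith [norm_sub_norm_le si ui, dist_eq_norm si ui, dist_eq_norm si sj]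
  have hcos := cos_angle_le_seven_ninths_of_norm_sub_one_le hj.le hij hdist
  have hsq := norm_smul_div_norm_sub_smul_div_norm_sq hsi hsj (r := 3) (by norm_num)
  rw [ge_iff_le, dist_eq_norm]
  refine le_of_pow_le_pow_left₀ two_ne_zero (norm_nonneg _) ?_
  rw [hsq]
  linarith
end
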